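/- Let F ⊆ A^{Z⁻} ∪ ⋃_{k≥1} A^k be minimal, written F = F′ ∪ F″ with F′ consisting of the finite words in F and F″ of the left-infinite words in F. Then B(X_F^inf) = B(X_{F′}^inf): the finite-block language of the set of infinite sequences avoiding F equals that of the set of infinite sequences avoiding only F′. -/

import Mathlib

open Set Topology Filter TopologicalSpace

universe u

/-- The two-sided full shift over `A`: sequences over `A ∪ {ø}` (with `ø = none`)
in which the empty letter propagates to the right. -/
def SigmaZ (A : Type u) : Type u :=
  {x : ℤ → Option A // ∀ i, x i = none → x (i + 1) = none}

namespace SigmaZ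

variable {A : Type u}

/-- The generalized cylinder `Z(x, F)`, where the finite nonempty sequence `x` is
encoded by its length `k` and its letters `w i` for `i ≤ k`. -/
def cyl (k : ℤ) (w : ℤ → A) (F : Finset A) : Set (SigmaZ A) :=
  {y | (∀ i ≤ k, y.1 i = some (w i)) ∧ ∀ a ∈ F, y.1 (k + 1) ≠ some a}

/-- Generalized cylinders together with complements of finite unions of cylinders `Z(x)`. -/
def basicSets (A : Type u) : Set (Set (SigmaZ A)) :=
  {s | (∃ (k : ℤ) (w : ℤ → A) (F : Finset A), s = cyl k w F) ∨
    ∃ (n : ℕ) (ks : Fin n → ℤ) (ws : Fin n → ℤ → A),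
      s = (⋃ j, cyl (ks j) (ws j) ∅)ᶜ}

instance : TopologicalSpace (SigmaZ A) :=
  TopologicalSpace.generateFrom (basicSets A)

/-- The empty sequence `Ø`. -/
def emptySeq (A : Type u) : SigmaZ A := ⟨fun _ => none, fun _ _ => rfl⟩

/-- The shift map. -/
def shift (x : SigmaZ A) : SigmaZ A :=
  ⟨fun i => x.1 (i + 1), fun i h => x.2 (i + 1) h⟩

end SigmaZ

namespace SigmaZ

variable {A : Type u}

/-- The finite word `w` (nonempty) occurs as a subblock of `x`. -/
def OccursWord (w : List A) (x : SigmaZ A) : Prop :=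
  ∃ k : ℤ, ∀ n : ℕ, n < w.length → x.1 (k + n) = w[n]?

/-- The left-infinite word `(a_i)_{i ≤ 0}`, encoded by `u : ℕ → A` with `u n = a_{-n}`,
occurs as a left-infinite subword of `x`. -/
def OccursLinf (u : ℕ → A) (x : SigmaZ A) : Prop :=
  ∃ k : ℤ, ∀ n : ℕ, x.1 (k - n) = some (u n)

/-- The infinite sequences avoiding all forbidden finite words (in `Fw`) and all
forbidden left-infinite words (in `Fl`). -/
def XFinf (Fw : Set (List A)) (Fl : Set (ℕ → A)) : Set (SigmaZ A) :=
  {x | (∀ i, x.1 i ≠ none) ∧ (∀ w ∈ Fw, ¬ OccursWord w x) ∧ ∀ u ∈ Fl, ¬ OccursLinf u x}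

/-- The set of letters `a` such that the left-infinite word `x·a` (where `x` has
length `l`) occurs as a left-infinite subword of some element of `Y`. -/
def followerLetters (Y : Set (SigmaZ A)) (x : SigmaZ A) (l : ℤ) : Set A :=
  {a | ∃ y ∈ Y, ∃ m : ℤ, y.1 m = some a ∧ ∀ i < (0 : ℤ), y.1 (m + i) = x.1 (l + 1 + i)}

open Classical in
/-- The shift space `X_F` determined by the forbidden words `F = Fw ∪ Fl`. -/
def XF (Fw : Set (List A)) (Fl : Set (ℕ → A)) : Set (SigmaZ A) :=
  XFinf Fw Fl ∪
    (if (XFinf Fw Fl).Infinite then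
      {emptySeq A} ∪ {x | ∃ l : ℤ, x.1 l ≠ none ∧ x.1 (l + 1) = none ∧
        (followerLetters (XFinf Fw Fl) x l).Infinite}
    else ∅)

end SigmaZ

namespace SigmaZ

variable {A : Type u}

/-- The set of finite nonempty words over `A` occurring in elements of `X`. -/
def Bwords (X : Set (SigmaZ A)) : Set (List A) :=
  {w | w ≠ [] ∧ ∃ x ∈ X, ∃ k : ℤ, ∀ n : ℕ, n < w.length → x.1 (k + n) = w[n]?}

/-- `u` is a finite subblock of the left-infinite word encoded by `f : ℕ → A`
(with `f n = a_{-n}`), ending at position `-m`. -/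
def IsSubblockLinf (u : List A) (f : ℕ → A) : Prop :=
  ∃ m : ℕ, ∀ n : ℕ, n < u.length → u[n]? = some (f (m + (u.length - 1 - n)))

/-- The set `F = Fw ∪ Fl` of forbidden words is minimal: every proper finite
subblock of a word of `F` belongs to the language of `X_F`. -/
def MinimalForbidden (Fw : Set (List A)) (Fl : Set (ℕ → A)) : Prop :=
  (∀ w ∈ Fw, ∀ u : List A, u ≠ [] → u ≠ w → u <:+: w → u ∈ Bwords (XF Fw Fl)) ∧
  (∀ f ∈ Fl, ∀ u : List A, u ≠ [] → IsSubblockLinf u f → u ∈ Bwords (XF Fw Fl))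

section Aux

variable {A : Type u}

lemma none_mono (x : SigmaZ A) {i j : ℤ} (h : i ≤ j) (hi : x.1 i = none) : x.1 j = none := by
  obtain ⟨n, rfl⟩ : ∃ n : ℕ, j = i + n := ⟨(j - i).toNat, by omega⟩
  clear h
  induction n with
  | zero => simpa using hi
  | succ m ih =>
    have he : i + ((m + 1 : ℕ) : ℤ) = (i + m) + 1 := by push_cast; ring
    rw [he]
    exact x.2 _ ih

/-- The letter of `x` at position `i`, when `x` has no empty entries. -/
noncomputable def letter (x : SigmaZ A) (hx : ∀ i, x.1 i ≠ none) (i : ℤ) : A :=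
  (x.1 i).get (Option.isSome_iff_ne_none.mpr (hx i))

lemma some_letter (x : SigmaZ A) (hx : ∀ i, x.1 i ≠ none) (i : ℤ) :
    some (letter x hx i) = x.1 i := Option.some_get _

/-- The block of `x` from position `q` to position `s`. -/
noncomputable def blockList (x : SigmaZ A) (hx : ∀ i, x.1 i ≠ none) (q s : ℤ) : List A :=
  List.ofFn (fun n : Fin ((s - q).toNat + 1) => letter x hx (q + ((n : ℕ) : ℤ)))

lemma blockList_length (x : SigmaZ A) (hx : ∀ i, x.1 i ≠ none) (q s : ℤ) :
    (blockList x hx q s).length = (s - q).toNat + 1 := by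
  simp [blockList]

lemma blockList_ne_nil (x : SigmaZ A) (hx : ∀ i, x.1 i ≠ none) (q s : ℤ) :
    blockList x hx q s ≠ [] := by
  intro h
  have h2 := blockList_length x hx q s
  rw [h] at h2
  simp at h2

lemma blockList_get? (x : SigmaZ A) (hx : ∀ i, x.1 i ≠ none) (q s : ℤ) {n : ℕ}
    (hn : n < (blockList x hx q s).length) :
    (blockList x hx q s)[n]? = x.1 (q + n) := by
  rw [blockList_length] at hn
  rw [blockList, List.getElem?_ofFn, dif_pos hn]
  exact some_letter x hx _

/-- `x` contains the block of `x₀` from position `q` to `s` (up to translation). -/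
def Blk (Y : Set (SigmaZ A)) (x : SigmaZ A) (q s : ℤ) : Prop :=
  ∃ z ∈ Y, ∃ t : ℤ, ∀ i : ℤ, q ≤ i → i ≤ s → z.1 (i + t) = x.1 i

lemma blk_of_mem_bwords {Y : Set (SigmaZ A)} {x : SigmaZ A} {q s : ℤ} {u : List A}
    (hlen : s - q < (u.length : ℤ))
    (hu : ∀ n : ℕ, n < u.length → u[n]? = x.1 (q + n))
    (hmem : u ∈ Bwords Y) : Blk Y x q s := by
  obtain ⟨-, z, hz, k, hk⟩ := hmem
  refine ⟨z, hz, k - q, fun i hqi his => ?_⟩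
  have hn : (((i - q).toNat : ℕ) : ℤ) = i - q := Int.toNat_of_nonneg (by omega)
  have h1 : (i - q).toNat < u.length := by omega
  have h2 := hk _ h1
  rw [hu _ h1] at h2
  have e1 : i + (k - q) = k + (((i - q).toNat : ℕ) : ℤ) := by omega
  have e2 : q + (((i - q).toNat : ℕ) : ℤ) = i := by omega
  rw [e1, h2, e2]

lemma bwords_XF_subset (Fw : Set (List A)) (Fl : Set (ℕ → A)) :
    Bwords (XF Fw Fl) ⊆ Bwords (XFinf Fw Fl) := by
  rintro u ⟨hne, x, hx, k, hk⟩
  have hlen0 : 0 < u.length := List.length_pos_iff.mpr hne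
  obtain ⟨a0, ha0⟩ : ∃ a, u[0]? = some a := by
    rw [List.getElem?_eq_getElem hlen0]; exact ⟨_, rfl⟩
  rcases hx with h | h
  · exact ⟨hne, x, h, k, hk⟩
  by_cases hinf : (XFinf Fw Fl).Infinite
  · rw [if_pos hinf] at h
    rcases h with h | h
    · -- x = emptySeq
      exfalso
      have h0 := hk 0 hlen0
      rw [Set.mem_singleton_iff] at h
      rw [h, ha0] at h0
      simp [emptySeq] at h0
    · obtain ⟨l, hl1, hl2, hfol⟩ := h
      obtain ⟨a, ha⟩ := hfol.nonempty
      obtain ⟨y, hy, m, hym, hmatch⟩ := ha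
      have hxnone : ∀ i : ℤ, l + 1 ≤ i → x.1 i = none := fun i hi => none_mono x hi hl2
      have hkl : ∀ n : ℕ, n < u.length → k + (n : ℤ) ≤ l := by
        intro n hn
        by_contra hcon
        have h2 := hxnone (k + n) (by omega)
        have h3 := hk n hn
        rw [h2] at h3
        rw [List.getElem?_eq_getElem hn] at h3
        exact absurd h3 (by simp)
      refine ⟨hne, y, hy, k + (m - l - 1), fun n hn => ?_⟩
      have e1 : k + (m - l - 1) + (n : ℤ) = m + (k + (n : ℤ) - l - 1) := by ring
      rw [e1, hmatch (k + (n : ℤ) - l - 1) (by have := hkl n hn; omega)]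
      have e2 : l + 1 + (k + (n : ℤ) - l - 1) = k + n := by ring
      rw [e2]
      exact hk n hn
  · rw [if_neg hinf] at h
    exact absurd h (Set.notMem_empty x)

lemma subblock_of_occursLinf {x y : SigmaZ A} (hx : ∀ i, x.1 i ≠ none)
    {q e p : ℤ} (hqe : q ≤ e) (hep : e ≤ p)
    (hagree : ∀ i : ℤ, q ≤ i → y.1 i = x.1 i)
    {f : ℕ → A} (hf : ∀ n : ℕ, y.1 (p - n) = some (f n)) :
    IsSubblockLinf (blockList x hx q e) f := by
  refine ⟨(p - e).toNat, fun n hn => ?_⟩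
  rw [blockList_get? x hx q e hn]
  rw [blockList_length] at hn ⊢
  set j : ℕ := (p - e).toNat + ((e - q).toNat + 1 - 1 - n) with hj
  have hpj : p - (j : ℤ) = q + n := by omega
  rw [← hagree (q + n) (by omega), ← hpj]
  exact hf j

lemma step_lemma {Fw : Set (List A)} {Fl : Set (ℕ → A)} (hmin : MinimalForbidden Fw Fl)
    {x : SigmaZ A} (hx : x ∈ XFinf Fw (∅ : Set (ℕ → A)))
    {q s : ℤ} (hqs : q ≤ s) (h : Blk (XFinf Fw Fl) x q s) :
    Blk (XFinf Fw Fl) x q (s + 1) := by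
  obtain ⟨hx1, hx2, -⟩ := hx
  obtain ⟨z, hz, t, hzt⟩ := h
  have hz1 : ∀ i, z.1 i ≠ none := hz.1
  let y : SigmaZ A := ⟨fun i => if i ≤ s then z.1 (i + t) else x.1 i, by
    intro i hi
    simp only [] at hi
    exfalso
    by_cases h' : i ≤ s
    · rw [if_pos h'] at hi; exact hz1 _ hi
    · rw [if_neg h'] at hi; exact hx1 _ hi⟩
  have hy1 : ∀ i, y.1 i ≠ none := by
    intro i
    show (if i ≤ s then z.1 (i + t) else x.1 i) ≠ none
    by_cases h' : i ≤ s
    · rw [if_pos h']; exact hz1 _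
    · rw [if_neg h']; exact hx1 _
  have hyz : ∀ i : ℤ, i ≤ s → y.1 i = z.1 (i + t) := by
    intro i h'
    show (if i ≤ s then z.1 (i + t) else x.1 i) = z.1 (i + t)
    rw [if_pos h']
  have hyx : ∀ i : ℤ, q ≤ i → y.1 i = x.1 i := by
    intro i h'
    show (if i ≤ s then z.1 (i + t) else x.1 i) = x.1 i
    by_cases h'' : i ≤ s
    · rw [if_pos h'']; exact hzt i h' h''
    · rw [if_neg h'']
  by_cases hyL : y ∈ XFinf Fw Fl
  · exact ⟨y, hyL, 0, fun i h1 h2 => by rw [add_zero]; exact hyx i h1⟩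
  have hcase : (∃ w ∈ Fw, OccursWord w y) ∨ (∃ f ∈ Fl, OccursLinf f y) := by
    by_contra hc
    push_neg at hc
    exact hyL ⟨hy1, hc.1, hc.2⟩
  rcases hcase with ⟨w, hwF, p, hp⟩ | ⟨f, hfF, p, hp⟩
  · -- forbidden finite word occurs in y
    have hxocc : ¬ OccursWord w x := hx2 w hwF
    have hwlen : 0 < w.length := by
      rcases Nat.eq_zero_or_pos w.length with h0 | h0
      · exact absurd ⟨0, fun n hn => absurd hn (by omega)⟩ hxocc
      · exact h0
    have hpq : p < q := by
      by_contra hcon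
      push_neg at hcon
      refine hxocc ⟨p, fun n hn => ?_⟩
      rw [← hyx (p + n) (by omega)]
      exact hp n hn
    have hend : ¬ ((p : ℤ) + w.length ≤ s + 1) := by
      intro hend
      refine hz.2.1 w hwF ⟨p + t, fun n hn => ?_⟩
      have hn' : (n : ℤ) < (w.length : ℤ) := by exact_mod_cast hn
      have e1 : p + t + (n : ℤ) = (p + n) + t := by ring
      rw [e1, ← hyz (p + n) (by omega)]
      exact hp n hn
    push_neg at hend
    set d : ℕ := (q - p).toNat with hd
    have hdc : ((d : ℕ) : ℤ) = q - p := Int.toNat_of_nonneg (by omega)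
    have hwlen' : ((w.length : ℕ) : ℤ) = (w.length : ℤ) := rfl
    have hdlt : d < w.length := by omega
    have hw1 : w.drop d ≠ [] := by
      rw [← List.length_pos_iff, List.length_drop]; omega
    have hw2 : w.drop d ≠ w := by
      intro he
      have := congrArg List.length he
      rw [List.length_drop] at this
      omega
    have hmem : w.drop d ∈ Bwords (XFinf Fw Fl) :=
      bwords_XF_subset Fw Fl (hmin.1 w hwF _ hw1 hw2 (List.drop_suffix d w).isInfix)
    refine blk_of_mem_bwords ?_ ?_ hmem
    · rw [List.length_drop]; omega
    · intro n hn
      rw [List.length_drop] at hn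
      rw [List.getElem?_drop, ← hp (d + n) (by omega)]
      have e1 : p + (((d + n : ℕ) : ℕ) : ℤ) = q + n := by push_cast; omega
      rw [e1]
      exact hyx (q + n) (by omega)
  · -- forbidden left-infinite word occurs in y
    have hps : s + 1 ≤ p := by
      by_contra h'
      push_neg at h'
      refine hz.2.2 f hfF ⟨p + t, fun n => ?_⟩
      have e1 : p + t - (n : ℤ) = (p - n) + t := by ring
      rw [e1, ← hyz (p - n) (by omega)]
      exact hp n
    have hsub := subblock_of_occursLinf hx1 (q := q) (e := s + 1) (p := p)
      (by omega) hps hyx hp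
    have hmem : blockList x hx1 q (s + 1) ∈ Bwords (XFinf Fw Fl) :=
      bwords_XF_subset Fw Fl (hmin.2 f hfF _ (blockList_ne_nil x hx1 q (s + 1)) hsub)
    refine blk_of_mem_bwords ?_ ?_ hmem
    · rw [blockList_length]; omega
    · intro n hn
      exact blockList_get? x hx1 q (s + 1) hn

lemma blk_iterate {Fw : Set (List A)} {Fl : Set (ℕ → A)} (hmin : MinimalForbidden Fw Fl)
    {x : SigmaZ A} (hx : x ∈ XFinf Fw (∅ : Set (ℕ → A)))
    {q s : ℤ} (hqs : q ≤ s) (h : Blk (XFinf Fw Fl) x q s) :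
    ∀ d : ℕ, Blk (XFinf Fw Fl) x q (s + d) := by
  intro d
  induction d with
  | zero => simpa using h
  | succ n ih =>
    have h2 := step_lemma hmin hx (q := q) (s := s + n) (by omega) ih
    have e1 : s + ((n + 1 : ℕ) : ℤ) = (s + n) + 1 := by push_cast; ring
    rw [e1]
    exact h2

end Aux

/-- For a minimal set of forbidden words `F = F′ ∪ F″` (finite words `F′`,
left-infinite words `F″`), the language of `X_F^inf` equals that of `X_{F′}^inf`. -/
theorem stmt19 {A : Type u} [Countable A] [Infinite A]
    (Fw : Set (List A)) (Fl : Set (ℕ → A))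
    (hmin : MinimalForbidden Fw Fl) :
    Bwords (XFinf Fw Fl) = Bwords (XFinf Fw (∅ : Set (ℕ → A))) := by
  apply Set.Subset.antisymm
  · rintro u ⟨hne, x, hxm, k, hk⟩
    exact ⟨hne, x, ⟨hxm.1, hxm.2.1, fun g hg => absurd hg (Set.notMem_empty g)⟩, k, hk⟩
  · rintro u ⟨hne, x, hx, k, hk⟩
    by_cases hxL : x ∈ XFinf Fw Fl
    · exact ⟨hne, x, hxL, k, hk⟩
    have hx1 : ∀ i, x.1 i ≠ none := hx.1
    have hcase : ∃ f ∈ Fl, OccursLinf f x := by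
      by_contra hc
      push_neg at hc
      exact hxL ⟨hx.1, hx.2.1, hc⟩
    obtain ⟨f, hfF, k0, hp⟩ := hcase
    set q : ℤ := min k k0 with hq
    have hqk0 : q ≤ k0 := min_le_right _ _
    have hqk : q ≤ k := min_le_left _ _
    have hsub := subblock_of_occursLinf hx1 (q := q) (e := k0) (p := k0)
      hqk0 le_rfl (fun i _ => rfl) hp
    have hbase : Blk (XFinf Fw Fl) x q k0 := by
      refine blk_of_mem_bwords ?_ ?_
        (bwords_XF_subset Fw Fl (hmin.2 f hfF _ (blockList_ne_nil x hx1 q k0) hsub))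
      · rw [blockList_length]; omega
      · intro n hn
        exact blockList_get? x hx1 q k0 hn
    have hiter := blk_iterate hmin hx hqk0 hbase ((k + u.length - 1 - k0).toNat)
    obtain ⟨z, hzL, t, hzt⟩ := hiter
    refine ⟨hne, z, hzL, k + t, fun n hn => ?_⟩
    have hn' : (n : ℤ) < (u.length : ℤ) := by exact_mod_cast hn
    have e1 : k + t + (n : ℤ) = (k + n) + t := by ring
    rw [e1, hzt (k + n) (by omega) (by omega)]
    exact hk n hn


end SigmaZ
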